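/- Let γ : ℂⁿ → ℂⁿ be in Poincaré–Dulac normal form: γⱼ(z) = μⱼ zⱼ + Pⱼ(z_{j+1},…,zₙ) where Pⱼ is a polynomial with no constant or linear part depending only on variables with index > j, and 0 < |μ₁| ≤ … ≤ |μₙ| < 1. Then for every ε > 0 there exists T > 0 such that for all real t ≥ T and all z on the unit sphere, |(d_t ∘ γ ∘ d_t⁻¹)(z)|² ≤ |μₙ|² + ε. In particular, for t large enough, d_t γ d_t⁻¹ maps the unit sphere into the open unit ball. -/

import Mathlib

/-!
Conjugating by `d_t` multiplies the monomial `z ^ m` of the `j`-th component by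
`t ^ (j + 1 - weightedDegree m)`, a negative power of `t` since `z ^ m` only involves variables
of index `> j`. On the unit sphere `d_t γ d_t⁻¹` is therefore the diagonal part, of norm at most
`|μₙ|`, plus an error of norm `O(1 / t)`.
-/

open Filter Topology

/-- `z ^ m` is homogeneous of this degree for the dilation `z ↦ (t ^ (l + 1) * z l)ₗ`
(indices start at `0`). -/
def weightedDegree {n : ℕ} (m : Fin n → ℕ) : ℕ := ∑ l, (l.val + 1) * m l

lemma lt_weightedDegree {n : ℕ} {m : Fin n → ℕ} (j : Fin n) (hm : ∀ l, l ≤ j → m l = 0)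
    (hne : ∃ l, m l ≠ 0) : j.val + 1 < weightedDegree m := by
  obtain ⟨l, hl⟩ := hne
  have hjl : j < l := lt_of_not_ge fun h => hl (hm l h)
  calc j.val + 1 < l.val + 1 := by simpa using hjl
    _ ≤ (l.val + 1) * m l := Nat.le_mul_of_pos_right _ (Nat.pos_of_ne_zero hl)
    _ ≤ weightedDegree m :=
      Finset.single_le_sum (f := fun l : Fin n => (l.val + 1) * m l)
        (fun _ _ => Nat.zero_le _) (Finset.mem_univ l)

lemma prod_inv_pow_mul_pow {K : Type*} [CommGroupWithZero K] {n : ℕ} (t : K) (z : Fin n → K)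
    (m : Fin n → ℕ) :
    ∏ l, ((t ^ (l.val + 1))⁻¹ * z l) ^ m l = (t ^ weightedDegree m)⁻¹ * ∏ l, z l ^ m l := by
  simp only [mul_pow, Finset.prod_mul_distrib, weightedDegree, ← Finset.prod_pow_eq_pow_sum,
    ← Finset.prod_inv_distrib, inv_pow, pow_mul]

lemma norm_pow_mul_prod_inv_pow_mul_pow_le {𝕜 : Type*} [NormedField 𝕜] {n : ℕ} {t : 𝕜}
    (ht : 1 ≤ ‖t‖) {z : Fin n → 𝕜} (hz : ∀ l, ‖z l‖ ≤ 1) {m : Fin n → ℕ} {k : ℕ}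
    (hk : k < weightedDegree m) :
    ‖t ^ k * ∏ l, ((t ^ (l.val + 1))⁻¹ * z l) ^ m l‖ ≤ ‖t‖⁻¹ := by
  have ht0 : 0 < ‖t‖ := one_pos.trans_le ht
  have hprod : ‖∏ l, z l ^ m l‖ ≤ 1 := by
    rw [norm_prod]
    exact Finset.prod_le_one (fun _ _ => by positivity)
      fun l _ => by simpa only [norm_pow] using pow_le_one₀ (norm_nonneg _) (hz l)
  have hpow : ‖t‖ ^ (k + 1) ≤ ‖t‖ ^ weightedDegree m := pow_le_pow_right₀ ht hk
  rw [prod_inv_pow_mul_pow, ← mul_assoc, norm_mul, norm_mul, norm_inv, norm_pow, norm_pow]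
  calc ‖t‖ ^ k * (‖t‖ ^ weightedDegree m)⁻¹ * ‖∏ l, z l ^ m l‖
      ≤ ‖t‖ ^ k * (‖t‖ ^ (k + 1))⁻¹ * 1 := by gcongr
    _ = ‖t‖⁻¹ := by field_simp; ring

lemma PiLp.norm_le_norm_of_forall_norm_le {ι : Type*} [Fintype ι] {β γ : ι → Type*}
    [∀ i, SeminormedAddCommGroup (β i)] [∀ i, SeminormedAddCommGroup (γ i)]
    {x : PiLp 2 β} {y : PiLp 2 γ} (h : ∀ i, ‖x i‖ ≤ ‖y i‖) : ‖x‖ ≤ ‖y‖ := by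
  refine le_of_sq_le_sq ?_ (norm_nonneg _)
  rw [PiLp.norm_sq_eq_of_L2, PiLp.norm_sq_eq_of_L2]
  exact Finset.sum_le_sum fun i _ => pow_le_pow_left₀ (norm_nonneg _) (h i) 2

lemma norm_pow_mul_sum_le {𝕜 : Type*} [NormedField 𝕜] {n : ℕ} {t : 𝕜} (ht : 1 ≤ ‖t‖)
    {z : Fin n → 𝕜} (hz : ∀ l, ‖z l‖ ≤ 1) {k : ℕ} (A : Finset (Fin n → ℕ))
    (hA : ∀ m ∈ A, k < weightedDegree m) (a : (Fin n → ℕ) → 𝕜) :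
    ‖t ^ k * ∑ m ∈ A, a m * ∏ l, ((t ^ (l.val + 1))⁻¹ * z l) ^ m l‖ ≤
      (∑ m ∈ A, ‖a m‖) * ‖t‖⁻¹ := by
  rw [Finset.mul_sum, Finset.sum_mul]
  refine (norm_sum_le _ _).trans (Finset.sum_le_sum fun m hm => ?_)
  rw [mul_left_comm, norm_mul]
  exact mul_le_mul_of_nonneg_left (norm_pow_mul_prod_inv_pow_mul_pow_le ht hz (hA m hm))
    (norm_nonneg _)

lemma norm_le_of_eq_mul_add_pow_mul_sum {n : ℕ} (μ : Fin n → ℂ) {b : ℝ} (hb : 0 ≤ b)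
    (hμ : ∀ j, ‖μ j‖ ≤ b) (A : Fin n → Finset (Fin n → ℕ)) (a : Fin n → (Fin n → ℕ) → ℂ)
    (hA : ∀ j, ∀ m ∈ A j, j.val + 1 < weightedDegree m) {t : ℝ} (ht : 1 ≤ t)
    {z : EuclideanSpace ℂ (Fin n)} (hz : ‖z‖ = 1) {w : EuclideanSpace ℂ (Fin n)}
    (hw : ∀ j, w j = μ j * z j +
      (t : ℂ) ^ (j.val + 1) * ∑ m ∈ A j, a j m * ∏ l, (((t : ℂ) ^ (l.val + 1))⁻¹ * z l) ^ m l) :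
    ‖w‖ ≤ b + ‖(WithLp.toLp 2 fun j => ∑ m ∈ A j, ‖a j m‖ : EuclideanSpace ℝ (Fin n))‖ * t⁻¹ := by
  have ht0 : 0 ≤ t := zero_le_one.trans ht
  have hnorm_t : ‖(t : ℂ)‖ = t := by rw [Complex.norm_real, Real.norm_of_nonneg ht0]
  set u : EuclideanSpace ℂ (Fin n) := WithLp.toLp 2 fun j => μ j * z j
  have hu : ‖u‖ ≤ b := by
    calc ‖u‖ ≤ ‖b • z‖ := PiLp.norm_le_norm_of_forall_norm_le fun j => by
          simpa [u, norm_smul, Real.norm_of_nonneg hb] using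
            mul_le_mul_of_nonneg_right (hμ j) (norm_nonneg (z j))
      _ = b := by rw [norm_smul, hz, Real.norm_of_nonneg hb, mul_one]
  have hv : ‖w - u‖ ≤ ‖(WithLp.toLp 2 fun j => ∑ m ∈ A j, ‖a j m‖ : EuclideanSpace ℝ (Fin n))‖
      * t⁻¹ := by
    rw [mul_comm, ← Real.norm_of_nonneg (inv_nonneg.2 ht0), ← norm_smul]
    refine PiLp.norm_le_norm_of_forall_norm_le fun j => ?_
    have hzl : ∀ l, ‖z l‖ ≤ 1 := fun l => hz ▸ PiLp.norm_apply_le z l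
    have := norm_pow_mul_sum_le (by rw [hnorm_t]; exact ht) hzl (A j) (hA j) (a j)
    simpa [u, hw, hnorm_t, abs_of_nonneg ht0, mul_comm,
      abs_of_nonneg (Finset.sum_nonneg fun m _ => norm_nonneg (a j m))] using this
  calc ‖w‖ = ‖u + (w - u)‖ := by rw [add_sub_cancel]
    _ ≤ _ := (norm_add_le _ _).trans (add_le_add hu hv)

lemma exists_pos_forall_ge_of_eventually_atTop {P : ℝ → Prop} (h : ∀ᶠ t in atTop, P t) :
    ∃ T > 0, ∀ t, T ≤ t → P t := by
  obtain ⟨T, hT, hP⟩ := (atTop_basis' 1).eventually_iff.1 h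
  exact ⟨T, one_pos.trans_le hT, fun _ ht => hP ht⟩

theorem conjugated_contraction_general (n : ℕ) (hn : 0 < n) (μ : Fin n → ℂ)
    (hmono : ∀ i j : Fin n, i ≤ j → ‖μ i‖ ≤ ‖μ j‖)
    (hlt : ∀ j, ‖μ j‖ < 1)
    (A : Fin n → Finset (Fin n → ℕ)) (a : Fin n → (Fin n → ℕ) → ℂ)
    -- each monomial of Pⱼ depends only on variables of index > j and is nonconstant
    (hsupp : ∀ j, ∀ m ∈ A j, (∀ l : Fin n, l ≤ j → m l = 0) ∧ ∃ l : Fin n, m l ≠ 0)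
    (γ : EuclideanSpace ℂ (Fin n) → EuclideanSpace ℂ (Fin n))
    (hγ : ∀ z j, γ z j = μ j * z j + ∑ m ∈ A j, a j m * ∏ l, z l ^ m l)
    (Φ : ℝ → EuclideanSpace ℂ (Fin n) → EuclideanSpace ℂ (Fin n))
    (hΦ : ∀ t z j, Φ t z j = (t : ℂ) ^ (j.val + 1) *
      γ (WithLp.toLp 2 (fun l => ((t : ℂ) ^ (l.val + 1))⁻¹ * z l)) j) :
    (∀ ε > (0 : ℝ), ∃ T > (0 : ℝ), ∀ t : ℝ, T ≤ t →
        ∀ z : EuclideanSpace ℂ (Fin n), ‖z‖ = 1 →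
          ‖Φ t z‖ ^ 2 ≤ ‖μ ⟨n - 1, Nat.sub_lt hn Nat.one_pos⟩‖ ^ 2 + ε) ∧
    (∃ T > (0 : ℝ), ∀ t : ℝ, T ≤ t →
        ∀ z : EuclideanSpace ℂ (Fin n), ‖z‖ = 1 → ‖Φ t z‖ < 1) := by
  set b := ‖μ ⟨n - 1, Nat.sub_lt hn Nat.one_pos⟩‖
  set K := ‖(WithLp.toLp 2 fun j => ∑ m ∈ A j, ‖a j m‖ : EuclideanSpace ℝ (Fin n))‖
  have hbound : ∀ t : ℝ, 1 ≤ t → ∀ z : EuclideanSpace ℂ (Fin n), ‖z‖ = 1 →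
      ‖Φ t z‖ ≤ b + K * t⁻¹ := by
    intro t ht z hz
    have htc : (t : ℂ) ≠ 0 := Complex.ofReal_ne_zero.2 (one_pos.trans_le ht).ne'
    refine norm_le_of_eq_mul_add_pow_mul_sum μ (norm_nonneg _)
      (fun j => hmono j _ (Fin.mk_le_mk.2 (by omega))) A a
      (fun j m hm => lt_weightedDegree j (hsupp j m hm).1 (hsupp j m hm).2) ht hz fun j => ?_
    rw [hΦ, hγ, mul_add, mul_left_comm _ (μ j), mul_inv_cancel_left₀ (pow_ne_zero _ htc)]
  have hlim : Tendsto (fun t : ℝ => b + K * t⁻¹) atTop (𝓝 b) := by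
    simpa using tendsto_const_nhds.add (tendsto_inv_atTop_zero.const_mul K)
  refine ⟨fun ε hε => exists_pos_forall_ge_of_eventually_atTop ?_,
    exists_pos_forall_ge_of_eventually_atTop ?_⟩
  · filter_upwards [eventually_ge_atTop 1,
      (hlim.pow 2).eventually (ge_mem_nhds (lt_add_of_pos_right _ hε))] with t ht hclose z hz
    exact (pow_le_pow_left₀ (norm_nonneg _) (hbound t ht z hz) 2).trans hclose
  · filter_upwards [eventually_ge_atTop 1, hlim.eventually (gt_mem_nhds (hlt _))]
      with t ht hclose z hz
    exact (hbound t ht z hz).trans_lt hclose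

/-- For γ in Poincaré–Dulac normal form
γⱼ(z) = μⱼ zⱼ + Pⱼ(z_{j+1},…,zₙ) with 0 < |μ₁| ≤ … ≤ |μₙ| < 1, for every ε > 0
there is T > 0 such that for all real t ≥ T and all z on the unit sphere,
|(d_t ∘ γ ∘ d_t⁻¹)(z)|² ≤ |μₙ|² + ε; in particular, for t large enough,
d_t γ d_t⁻¹ maps the unit sphere into the open unit ball. -/
theorem conjugated_contraction (n : ℕ) (hn : 0 < n) (μ : Fin n → ℂ)
    (hpos : ∀ j, 0 < ‖μ j‖)
    (hmono : ∀ i j : Fin n, i ≤ j → ‖μ i‖ ≤ ‖μ j‖)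
    (hlt : ∀ j, ‖μ j‖ < 1)
    (A : Fin n → Finset (Fin n → ℕ)) (a : Fin n → (Fin n → ℕ) → ℂ)
    -- each monomial of Pⱼ depends only on variables of index > j and is nonconstant
    (hsupp : ∀ j, ∀ m ∈ A j, (∀ l : Fin n, l ≤ j → m l = 0) ∧ ∃ l : Fin n, m l ≠ 0)
    (γ : EuclideanSpace ℂ (Fin n) → EuclideanSpace ℂ (Fin n))
    (hγ : ∀ z j, γ z j = μ j * z j + ∑ m ∈ A j, a j m * ∏ l, z l ^ m l)
    (Φ : ℝ → EuclideanSpace ℂ (Fin n) → EuclideanSpace ℂ (Fin n))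
    (hΦ : ∀ t z j, Φ t z j = (t : ℂ) ^ (j.val + 1) *
      γ (WithLp.toLp 2 (fun l => ((t : ℂ) ^ (l.val + 1))⁻¹ * z l)) j) :
    (∀ ε > (0 : ℝ), ∃ T > (0 : ℝ), ∀ t : ℝ, T ≤ t →
        ∀ z : EuclideanSpace ℂ (Fin n), ‖z‖ = 1 →
          ‖Φ t z‖ ^ 2 ≤ ‖μ ⟨n - 1, Nat.sub_lt hn Nat.one_pos⟩‖ ^ 2 + ε) ∧
    (∃ T > (0 : ℝ), ∀ t : ℝ, T ≤ t →
        ∀ z : EuclideanSpace ℂ (Fin n), ‖z‖ = 1 → ‖Φ t z‖ < 1) :=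
  conjugated_contraction_general n hn μ hmono hlt A a hsupp γ hγ Φ hΦ
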